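/- Let G be a tree, ℓ a node, S ⊆ X nonempty, z = π(ℓ,S), t ∈ X, and x = π(ℓ, S∪{t}). If x ∈ H(S), then x = z. -/

import Mathlib

open SimpleGraph

/-- `z` lies on a path from `x` to `y` in `G` (in a tree, the unique path). -/
def pathSet {X : Type*} (G : SimpleGraph X) (x y z : X) : Prop :=
  ∃ p : G.Walk x y, p.IsPath ∧ z ∈ p.support

/-- The path hull `H(S)`: union of paths between pairs of nodes of `S`. -/
def hull {X : Type*} (G : SimpleGraph X) (S : Set X) (z : X) : Prop :=
  ∃ x ∈ S, ∃ y ∈ S, pathSet G x y z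

/-- `m` is a distance minimizer of `x` on the path hull of `S`. -/
def isMinimizer {X : Type*} (G : SimpleGraph X) (x : X) (S : Set X) (m : X) : Prop :=
  hull G S m ∧ ∀ y, hull G S y → G.dist x m ≤ G.dist x y

/-- `ℓ` is a leaf: it has exactly one neighbor. -/
def isLeaf {X : Type*} (G : SimpleGraph X) (ℓ : X) : Prop := ∃! x, G.Adj ℓ x

/-- `t` is the top-ranked alternative of the strict preference `P`. -/
def isTop {X : Type*} (P : X → X → Prop) (t : X) : Prop := ∀ y, y ≠ t → P t y

/-- `P` with peak `t` is single-peaked on the tree `G`. -/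
def singlePeakedAt {X : Type*} (G : SimpleGraph X) (P : X → X → Prop) (t : X) : Prop :=
  ∀ a b, a ≠ b → pathSet G t a b → P b a

/-!
Both `x` and `z` lie in the path hull `H(S)`, which is convex, and each of them is at least as
close to `ℓ` as every node of `H(S)`, hence as every node of the path between them. In an acyclic
graph, if an endpoint `a` of a path `a — b` is a closest node of the path to `ℓ`, then the path
from `ℓ` to `a` extends to a path from `ℓ` to `b`, so `d(ℓ, b) = d(ℓ, a) + d(a, b)`. Applied from
both ends this forces `d(x, z) = 0`.
-/

namespace SimpleGraph

variable {X : Type*} {G : SimpleGraph X}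

lemma Walk.IsPath.append {u v w : X} {p : G.Walk u v} {q : G.Walk v w} (hp : p.IsPath)
    (hq : q.IsPath) (hpq : p.support.Disjoint q.support.tail) : (p.append q).IsPath := by
  rw [Walk.isPath_def, Walk.support_append]
  exact hp.support_nodup.append (hq.support_nodup.sublist (List.tail_sublist _)) hpq

lemma IsAcyclic.length_eq_dist_of_isPath (hG : G.IsAcyclic) {u v : X} {p : G.Walk u v}
    (hp : p.IsPath) : p.length = G.dist u v := by
  obtain ⟨q, hq, hql⟩ := p.reachable.exists_path_of_dist
  have hpq : (⟨p, hp⟩ : G.Path u v) = ⟨q, hq⟩ := (hG.subsingleton_path u v).elim _ _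
  rw [show p = q from congrArg Subtype.val hpq, hql]

lemma IsAcyclic.dist_add_dist_of_mem_support (hG : G.IsAcyclic) {u v w : X} {p : G.Walk u v}
    (hp : p.IsPath) (hw : w ∈ p.support) : G.dist u w + G.dist w v = G.dist u v := by
  obtain ⟨q, r, hq, hr, rfl⟩ := hp.mem_support_iff_exists_append.mp hw
  rw [← hG.length_eq_dist_of_isPath hq, ← hG.length_eq_dist_of_isPath hr,
    ← hG.length_eq_dist_of_isPath hp, Walk.length_append]

lemma IsAcyclic.support_subset_support_of_isPath (hG : G.IsAcyclic) {u v : X} {p : G.Walk u v}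
    (hp : p.IsPath) (W : G.Walk u v) : p.support ⊆ W.support := by
  classical
  have hpW : (⟨p, hp⟩ : G.Path u v) = ⟨W.bypass, W.bypass_isPath⟩ :=
    (hG.subsingleton_path u v).elim _ _
  rw [show p = W.bypass from congrArg Subtype.val hpW]
  exact W.support_bypass_subset_support

/-- The path from `ℓ` to `a` followed by `p` is a path: a common node `v` of the two has
`d(ℓ, v) + d(v, a) = d(ℓ, a) ≤ d(ℓ, v)`, so `v = a`. -/
lemma IsAcyclic.dist_eq_dist_add_dist_of_forall_dist_le (hG : G.IsAcyclic) {ℓ a b : X}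
    (hℓ : G.Reachable ℓ a) {p : G.Walk a b} (hp : p.IsPath)
    (hmin : ∀ v ∈ p.support, G.dist ℓ a ≤ G.dist ℓ v) :
    G.dist ℓ b = G.dist ℓ a + G.dist a b := by
  classical
  obtain ⟨q, hq, hql⟩ := hℓ.exists_path_of_dist
  have hdisj : q.support.Disjoint p.support.tail := by
    intro v hvq hvp
    have hsplit := hG.dist_add_dist_of_mem_support hq hvq
    have hva : v = a := (q.dropUntil v hvq).reachable.dist_eq_zero_iff.mp <| by
      have := hmin v (List.mem_of_mem_tail hvp)
      omega
    subst hva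
    exact (List.nodup_cons.mp (p.cons_tail_support ▸ hp.support_nodup)).1 hvp
  rw [← hG.length_eq_dist_of_isPath (hq.append hp hdisj), Walk.length_append, hql,
    hG.length_eq_dist_of_isPath hp]

lemma IsAcyclic.eq_of_forall_dist_le (hG : G.IsAcyclic) {ℓ x z : X} (hℓ : G.Reachable ℓ x)
    {p : G.Walk x z} (hp : p.IsPath) (hx : ∀ v ∈ p.support, G.dist ℓ x ≤ G.dist ℓ v)
    (hz : ∀ v ∈ p.support, G.dist ℓ z ≤ G.dist ℓ v) : x = z := by
  have hxz := hG.dist_eq_dist_add_dist_of_forall_dist_le hℓ hp hx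
  have hzx := hG.dist_eq_dist_add_dist_of_forall_dist_le (hℓ.trans p.reachable) hp.reverse
    (by simpa only [Walk.support_reverse, List.mem_reverse] using hz)
  rw [dist_comm (u := z)] at hzx
  exact p.reachable.dist_eq_zero_iff.mp (by omega)

end SimpleGraph

lemma hull_mono {X : Type*} {G : SimpleGraph X} {S T : Set X} (hST : S ⊆ T) {w : X}
    (hw : hull G S w) : hull G T w := by
  obtain ⟨a, ha, b, hb, hab⟩ := hw
  exact ⟨a, hST ha, b, hST hb, hab⟩

/-- The path from `x` to `z` lies in the walk that runs back along the path of `S` through `x`,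
across a path between two nodes of `S`, and along the path of `S` through `z`. -/
lemma hull_of_pathSet {X : Type*} {G : SimpleGraph X} (hG : G.IsTree) {S : Set X} {x z w : X}
    (hx : hull G S x) (hz : hull G S z) (hw : pathSet G x z w) : hull G S w := by
  classical
  obtain ⟨a, haS, b, hbS, pab, hpab, hxab⟩ := hx
  obtain ⟨c, hcS, d, hdS, pcd, hpcd, hzcd⟩ := hz
  obtain ⟨r, hr, hwr⟩ := hw
  obtain ⟨q, hq, -⟩ := (hG.connected a c).exists_path_of_dist
  have hwW := hG.isAcyclic.support_subset_support_of_isPath hr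
    (((pab.takeUntil x hxab).reverse.append q).append (pcd.takeUntil z hzcd)) hwr
  simp only [Walk.mem_support_append_iff, Walk.support_reverse, List.mem_reverse] at hwW
  rcases hwW with (hwab | hwq) | hwcd
  · exact ⟨a, haS, b, hbS, pab, hpab, pab.support_takeUntil_subset_support hxab hwab⟩
  · exact ⟨a, haS, c, hcS, q, hq, hwq⟩
  · exact ⟨c, hcS, d, hdS, pcd, hpcd, pcd.support_takeUntil_subset_support hzcd hwcd⟩

theorem minimizer_eq_of_mem_hull_general {X : Type*}
    (G : SimpleGraph X) (hG : G.IsTree)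
    (ℓ : X) (S : Set X) (t : X)
    (z x : X)
    (hz : isMinimizer G ℓ S z)
    (hx : isMinimizer G ℓ (S ∪ {t}) x)
    (hxS : hull G S x) :
    x = z := by
  obtain ⟨p, hp, -⟩ := hG.existsUnique_path x z
  have hpS : ∀ v ∈ p.support, hull G S v := fun v hv => hull_of_pathSet hG hxS hz.1 ⟨p, hp, hv⟩
  exact hG.isAcyclic.eq_of_forall_dist_le (hG.connected ℓ x) hp
    (fun v hv => hx.2 v (hull_mono Set.subset_union_left (hpS v hv)))
    (fun v hv => hz.2 v (hpS v hv))

theorem minimizer_eq_of_mem_hull {X : Type*} [Fintype X]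
    (G : SimpleGraph X) (hG : G.IsTree)
    (ℓ : X) (S : Set X) (hS : S.Nonempty) (t : X)
    (z x : X)
    (hz : isMinimizer G ℓ S z)
    (hx : isMinimizer G ℓ (S ∪ {t}) x)
    (hxS : hull G S x) :
    x = z :=
  minimizer_eq_of_mem_hull_general G hG ℓ S t z x hz hx hxS
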